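/- Invariance for the Kepler problem: fix α > 2 and ω > 0. The sets K⁺(ω) = {(x,ẋ) : E(x,ẋ) < V*_{c(ω)}, x × ẋ ≥ c(ω), K_ω(x) ≥ 0} and K⁻(ω) = {(x,ẋ) : E(x,ẋ) < V*_{c(ω)}, x × ẋ ≥ c(ω), K_ω(x) < 0} are invariant under the flow of the planar Kepler problem ẍ = −∇U(x): any solution with initial data in K⁺(ω) (respectively K⁻(ω)) remains in K⁺(ω) (respectively K⁻(ω)) for all time of existence. -/

import Mathlib

/- STATEMENT 5: invariance of K⁺(ω) and K⁻(ω) under the planar Kepler flow, α > 2. -/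

namespace KeplerPaper

open Real Filter

noncomputable section

abbrev E2 := EuclideanSpace ℝ (Fin 2)

/-- The Kepler potential `U(x) = -1/|x|^α`. -/
def pot (α : ℝ) (q : E2) : ℝ := -(1 / ‖q‖ ^ α)

/-- The Kepler energy `E(x, ẋ) = (1/2)|ẋ|² + U(x)`. -/
def energy (α : ℝ) (q v : E2) : ℝ := (1 / 2) * ‖v‖ ^ 2 + pot α q

/-- `ẍ = -∇U(x) = -α x / |x|^{α+2}`. -/
def accel (α : ℝ) (q : E2) : E2 := (-(α / ‖q‖ ^ (α + 2))) • q

/-- The scalar angular momentum `x × ẋ = x₁ẋ₂ − x₂ẋ₁`. -/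
def cross2 (a b : E2) : ℝ := a 0 * b 1 - a 1 * b 0

/-- The angular momentum `c(ω) = α^{2/(2+α)} ω^{(α−2)/(α+2)}` of the relative equilibrium
of frequency `ω`. -/
def cOmega (α ω : ℝ) : ℝ := α ^ (2 / (2 + α)) * ω ^ ((α - 2) / (α + 2))

/-- `V*_c = α^{2/(2−α)} (1/2 − 1/α) c^{2α/(α−2)}`, the critical value of the effective
potential `V_c(r) = c²/(2r²) − 1/r^α`. -/
def Vstar (α c : ℝ) : ℝ := α ^ (2 / (2 - α)) * (1 / 2 - 1 / α) * c ^ (2 * α / (α - 2))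

/-- The threshold function `K_ω(x) = ω²|x|² − α/|x|^α`. -/
def Kfun (α ω : ℝ) (q : E2) : ℝ := ω ^ 2 * ‖q‖ ^ 2 - α / ‖q‖ ^ α

/-- Membership in `K⁺(ω)`. -/
def memKplus (α ω : ℝ) (q v : E2) : Prop :=
  energy α q v < Vstar α (cOmega α ω) ∧ cOmega α ω ≤ cross2 q v ∧ 0 ≤ Kfun α ω q

/-- Membership in `K⁻(ω)`. -/
def memKminus (α ω : ℝ) (q v : E2) : Prop :=
  energy α q v < Vstar α (cOmega α ω) ∧ cOmega α ω ≤ cross2 q v ∧ Kfun α ω q < 0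

/-- The time interval `[0, σ)` for `σ ∈ (0, ∞]`. -/
def Dom (σ : EReal) : Set ℝ := {t : ℝ | 0 ≤ t ∧ (t : EReal) < σ}

/-- `x` (with velocity `v`) solves the planar Kepler problem `ẍ = −∇U(x)` on the set `s`. -/
def IsSolnOn (α : ℝ) (x v : ℝ → E2) (s : Set ℝ) : Prop :=
  ∀ t ∈ s, x t ≠ 0 ∧ HasDerivAt x (v t) t ∧ HasDerivAt v (accel α (x t)) t

/-- `x` is a solution on its maximal interval of existence `[0, σ)`. -/
def IsMaxSoln (α : ℝ) (σ : EReal) (x v : ℝ → E2) : Prop :=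
  0 < σ ∧ IsSolnOn α x v (Dom σ) ∧
    ∀ (σ' : EReal) (x' v' : ℝ → E2), IsSolnOn α x' v' (Dom σ') →
      (∀ t ∈ Dom σ, x' t = x t ∧ v' t = v t) → σ' ≤ σ


section InvarianceAux
open Set

variable {α ω : ℝ}

private lemma norm_sq_eq' (q : E2) : ‖q‖ ^ 2 = q 0 ^ 2 + q 1 ^ 2 := by
  rw [EuclideanSpace.norm_eq, Real.sq_sqrt (by positivity)]
  simp [Fin.sum_univ_two, sq_abs]

private lemma cross2_le (q v : E2) : cross2 q v ≤ ‖q‖ * ‖v‖ := by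
  have h1 := norm_sq_eq' q
  have h2 := norm_sq_eq' v
  have hq : 0 ≤ ‖q‖ := norm_nonneg q
  have hv : 0 ≤ ‖v‖ := norm_nonneg v
  unfold cross2
  nlinarith [sq_nonneg (q 0 * v 0 + q 1 * v 1), mul_nonneg hq hv,
    sq_nonneg (‖q‖ * ‖v‖ - (q 0 * v 1 - q 1 * v 0))]

private lemma pot_eq (hα0 : 0 < α) (q : E2) :
    pot α q = -(((q 0 ^ 2 + q 1 ^ 2) ^ (α / 2))⁻¹) := by
  unfold pot
  rw [← norm_sq_eq', one_div]
  congr 2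
  rw [← Real.rpow_natCast ‖q‖ 2, ← Real.rpow_mul (norm_nonneg q)]
  norm_num
  congr 1
  ring

private lemma energy_eq (hα0 : 0 < α) (q w : E2) :
    energy α q w = 1/2 * (w 0 ^ 2 + w 1 ^ 2) - ((q 0 ^ 2 + q 1 ^ 2) ^ (α / 2))⁻¹ := by
  unfold energy
  rw [pot_eq hα0, norm_sq_eq']
  ring

private lemma Kfun_ne_zero (hα : 2 < α) (hω : 0 < ω) (q w : E2) (hq : q ≠ 0)
    (hc : cOmega α ω ≤ cross2 q w) (hE : energy α q w < Vstar α (cOmega α ω)) :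
    Kfun α ω q ≠ 0 := by
  intro h0
  have hα0 : (0:ℝ) < α := by linarith
  have hrpos : 0 < ‖q‖ := norm_pos_iff.mpr hq
  set r := ‖q‖ with hrdef
  set c := cOmega α ω with hcdef
  have hcpos : 0 < c := mul_pos (rpow_pos_of_pos hα0 _) (rpow_pos_of_pos hω _)
  have hrapos : 0 < r ^ α := rpow_pos_of_pos hrpos α
  -- lower bound for the energy
  have hcr : c ≤ r * ‖w‖ := le_trans hc (cross2_le q w)
  have hEb : c ^ 2 / (2 * r ^ 2) - 1 / r ^ α ≤ energy α q w := by
    have h1 : c ^ 2 ≤ r ^ 2 * ‖w‖ ^ 2 := by nlinarith [norm_nonneg w]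
    have h2 : c ^ 2 / (2 * r ^ 2) ≤ 1 / 2 * ‖w‖ ^ 2 := by
      rw [div_le_iff₀ (by positivity)]; nlinarith
    unfold energy pot
    linarith
  -- the constraint K = 0
  have hK : ω ^ 2 * r ^ 2 * r ^ α = α := by
    have h : ω ^ 2 * r ^ 2 = α / r ^ α := by
      unfold Kfun at h0; linarith
    rw [h]; field_simp
  set L := Real.log α with hL
  set M := Real.log ω with hM
  set R := Real.log r with hR
  have hLMR : 2 * M + 2 * R + α * R = L := by
    have h := congrArg Real.log hK
    rw [Real.log_mul (by positivity) hrapos.ne', Real.log_mul (by positivity) (by positivity),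
      Real.log_pow, Real.log_pow, Real.log_rpow hrpos] at h
    push_cast at h
    linarith
  have hne2 : α + 2 ≠ 0 := by linarith
  have hne2' : α - 2 ≠ 0 := by linarith
  have hne2'' : 2 - α ≠ 0 := by linarith
  have hlc : Real.log c = 2 / (2 + α) * L + (α - 2) / (α + 2) * M := by
    rw [hcdef]; unfold cOmega
    rw [Real.log_mul (by positivity) (by positivity), Real.log_rpow hα0, Real.log_rpow hω]
  set E0 := (2 * L + 2 * α * M) / (α + 2) with hE0
  have hc2 : c ^ 2 = Real.exp (2 * Real.log c) := by
    have h : Real.log (c ^ 2) = 2 * Real.log c := by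
      rw [Real.log_pow]; push_cast; ring
    rw [← Real.exp_log (pow_pos hcpos 2), h]
  have hr2 : r ^ 2 = Real.exp (2 * R) := by
    have h : Real.log (r ^ 2) = 2 * R := by
      rw [Real.log_pow]; push_cast; ring
    rw [← Real.exp_log (pow_pos hrpos 2), h]
  have hra : r ^ α = Real.exp (R * α) := by
    rw [rpow_def_of_pos hrpos]
  have hRval : R = (L - 2 * M) / (α + 2) := by
    rw [eq_div_iff hne2]; linarith
  have hE0a : 2 * Real.log c - 2 * R = E0 := by
    rw [hlc, hRval, hE0]
    field_simp
    ring
  have hE0b : -(R * α) = E0 - L := by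
    rw [hRval, hE0]
    field_simp
    ring
  have hVeq : Vstar α c = c ^ 2 / (2 * r ^ 2) - 1 / r ^ α := by
    have lhs : Vstar α c
        = (1/2 - 1/α) * Real.exp (2 / (2 - α) * L + 2 * α / (α - 2) * Real.log c) := by
      unfold Vstar
      rw [rpow_def_of_pos hα0, rpow_def_of_pos hcpos, Real.exp_add]
      rw [hL]
      ring
    have lexp : 2 / (2 - α) * L + 2 * α / (α - 2) * Real.log c = E0 := by
      rw [hlc, hE0]
      field_simp
      ring
    calc Vstar α c = (1/2 - 1/α) * Real.exp E0 := by rw [lhs, lexp]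
      _ = c ^ 2 / (2 * r ^ 2) - 1 / r ^ α := by
          rw [hc2, hr2, hra]
          rw [show (2:ℝ) * Real.log c = E0 + 2 * R by linarith [hE0a],
            show R * α = L - E0 by linarith [hE0b]]
          rw [Real.exp_add, Real.exp_sub, Real.exp_log hα0]
          field_simp
  linarith

private lemma hasDerivAt_proj {f : ℝ → E2} {f' : E2} {t : ℝ}
    (h : HasDerivAt f f' t) (i : Fin 2) :
    HasDerivAt (fun s => f s i) (f' i) t := by
  have := (EuclideanSpace.proj (𝕜 := ℝ) i).hasFDerivAt.comp_hasDerivAt t h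
  exact this

private lemma accel_apply (α : ℝ) (q : E2) (i : Fin 2) :
    accel α q i = (-(α / ‖q‖ ^ (α + 2))) * q i := by
  unfold accel
  simp

private lemma cross_deriv {x v : ℝ → E2} {t : ℝ}
    (hdx : HasDerivAt x (v t) t) (hdv : HasDerivAt v (accel α (x t)) t) :
    HasDerivAt (fun s => cross2 (x s) (v s)) 0 t := by
  have hx0 := hasDerivAt_proj hdx 0
  have hx1 := hasDerivAt_proj hdx 1
  have hv0 := hasDerivAt_proj hdv 0
  have hv1 := hasDerivAt_proj hdv 1
  have h := (hx0.mul hv1).sub (hx1.mul hv0)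
  unfold cross2
  refine h.congr_deriv (Eq.symm ?_)
  rw [accel_apply, accel_apply]
  ring

private lemma norm_rpow_eq {β : ℝ} (q : E2) :
    ‖q‖ ^ β = (q 0 ^ 2 + q 1 ^ 2) ^ (β / 2) := by
  rw [← norm_sq_eq', ← Real.rpow_natCast ‖q‖ 2, ← Real.rpow_mul (norm_nonneg q)]
  norm_num
  congr 1
  ring

private lemma energy_deriv (hα : 2 < α) {x v : ℝ → E2} {t : ℝ} (hne : x t ≠ 0)
    (hdx : HasDerivAt x (v t) t) (hdv : HasDerivAt v (accel α (x t)) t) :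
    HasDerivAt (fun s => energy α (x s) (v s)) 0 t := by
  have hα0 : (0:ℝ) < α := by linarith
  have hx0 := hasDerivAt_proj hdx 0
  have hx1 := hasDerivAt_proj hdx 1
  have hv0 := hasDerivAt_proj hdv 0
  have hv1 := hasDerivAt_proj hdv 1
  have hNpos : 0 < x t 0 ^ 2 + x t 1 ^ 2 := by
    have h1 := norm_sq_eq' (x t)
    have h2 : 0 < ‖x t‖ := norm_pos_iff.mpr hne
    nlinarith
  have hPpos : 0 < (x t 0 ^ 2 + x t 1 ^ 2) ^ (α / 2) := rpow_pos_of_pos hNpos _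
  have hNd : HasDerivAt (fun s => x s 0 ^ 2 + x s 1 ^ 2)
      (2 * x t 0 ^ 1 * v t 0 + 2 * x t 1 ^ 1 * v t 1) t := by
    have := (hx0.pow 2).add (hx1.pow 2)
    norm_num at this ⊢
    exact this
  have hP := hNd.rpow_const (p := α / 2) (Or.inl hNpos.ne')
  have hI := hP.inv hPpos.ne'
  have hW := ((hv0.pow 2).add (hv1.pow 2)).const_mul (1/2 : ℝ)
  have hfin := hW.sub hI
  have hfe : (fun s => energy α (x s) (v s)) =
      (fun s => 1/2 * (v s 0 ^ 2 + v s 1 ^ 2) - ((x s 0 ^ 2 + x s 1 ^ 2) ^ (α / 2))⁻¹) :=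
    funext fun s => energy_eq hα0 _ _
  rw [hfe]
  refine hfin.congr_deriv (Eq.symm ?_)
  rw [accel_apply, accel_apply, norm_rpow_eq (x t),
    show (α + 2) / 2 = α / 2 + 1 by ring, Real.rpow_add hNpos, Real.rpow_one,
    Real.rpow_sub hNpos, Real.rpow_one]
  field_simp
  ring

private lemma Icc_subset_Dom {σ : EReal} {t : ℝ} (ht : t ∈ Dom σ) : Icc (0:ℝ) t ⊆ Dom σ :=
  fun s hs => ⟨hs.1, lt_of_le_of_lt (EReal.coe_le_coe_iff.mpr hs.2) ht.2⟩

private lemma conserved (hα : 2 < α) {σ : EReal} {x v : ℝ → E2}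
    (hx : IsSolnOn α x v (Dom σ)) {t : ℝ} (ht : t ∈ Dom σ) :
    energy α (x t) (v t) = energy α (x 0) (v 0) ∧
      cross2 (x t) (v t) = cross2 (x 0) (v 0) := by
  have hsub := Icc_subset_Dom ht
  have hder : ∀ s ∈ Dom σ, HasDerivAt (fun u => energy α (x u) (v u)) 0 s := by
    intro s hs
    obtain ⟨h1, h2, h3⟩ := hx s hs
    exact energy_deriv hα h1 h2 h3
  have hder' : ∀ s ∈ Dom σ, HasDerivAt (fun u => cross2 (x u) (v u)) 0 s := by
    intro s hs
    obtain ⟨h1, h2, h3⟩ := hx s hs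
    exact cross_deriv h2 h3
  constructor
  · exact constant_of_has_deriv_right_zero
      (fun s hs => (hder s (hsub hs)).continuousAt.continuousWithinAt)
      (fun s hs => (hder s (hsub (Ico_subset_Icc_self hs))).hasDerivWithinAt)
      t ⟨ht.1, le_refl t⟩
  · exact constant_of_has_deriv_right_zero
      (fun s hs => (hder' s (hsub hs)).continuousAt.continuousWithinAt)
      (fun s hs => (hder' s (hsub (Ico_subset_Icc_self hs))).hasDerivWithinAt)
      t ⟨ht.1, le_refl t⟩

end InvarianceAux

/-- **Invariance of `K⁺(ω)` and `K⁻(ω)`** for the planar Kepler problem with `α > 2`: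
a solution starting in `K⁺(ω)` (resp. `K⁻(ω)`) remains there for all time of existence. -/
theorem Kpm_invariant (α ω : ℝ) (hα : 2 < α) (hω : 0 < ω)
    (σ : EReal) (x v : ℝ → E2) (hσ : 0 < σ) (hx : IsSolnOn α x v (Dom σ)) :
    (memKplus α ω (x 0) (v 0) → ∀ t ∈ Dom σ, memKplus α ω (x t) (v t)) ∧
    (memKminus α ω (x 0) (v 0) → ∀ t ∈ Dom σ, memKminus α ω (x t) (v t)) := by
  classical
  have hα0 : (0:ℝ) < α := by linarith
  have h0dom : (0:ℝ) ∈ Dom σ := ⟨le_refl 0, by simpa using hσ⟩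
  -- Under the hypotheses at time 0, Kfun never vanishes along the solution
  have hKne : energy α (x 0) (v 0) < Vstar α (cOmega α ω) →
      cOmega α ω ≤ cross2 (x 0) (v 0) →
      ∀ s ∈ Dom σ, Kfun α ω (x s) ≠ 0 := by
    intro hEV hcv s hs
    obtain ⟨hE, hC⟩ := conserved hα hx hs
    exact Kfun_ne_zero hα hω _ (v s) (hx s hs).1 (by rw [hC]; exact hcv) (by rw [hE]; exact hEV)
  -- continuity of s ↦ Kfun α ω (x s) on [0, t]
  have hKcont : ∀ t ∈ Dom σ, ContinuousOn (fun s => Kfun α ω (x s)) (Set.Icc 0 t) := by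
    intro t ht
    have hsub := Icc_subset_Dom ht
    have hxc : ContinuousOn x (Set.Icc 0 t) :=
      fun s hs => ((hx s (hsub hs)).2.1.continuousAt).continuousWithinAt
    have hnc : ContinuousOn (fun s => ‖x s‖) (Set.Icc 0 t) := hxc.norm
    have h1 : ContinuousOn (fun s => ‖x s‖ ^ α) (Set.Icc 0 t) :=
      hnc.rpow_const (fun s hs => Or.inr hα0.le)
    have h2 : ContinuousOn (fun s => α / ‖x s‖ ^ α) (Set.Icc 0 t) :=
      continuousOn_const.div h1
        (fun s hs => (rpow_pos_of_pos (norm_pos_iff.mpr (hx s (hsub hs)).1) α).ne')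
    exact (continuousOn_const.mul (hnc.pow 2)).sub h2
  constructor
  · rintro ⟨hEV, hcv, hK0⟩ t ht
    obtain ⟨hE, hC⟩ := conserved hα hx ht
    refine ⟨by rw [hE]; exact hEV, by rw [hC]; exact hcv, ?_⟩
    have hg0 : 0 < Kfun α ω (x 0) := lt_of_le_of_ne hK0 (Ne.symm (hKne hEV hcv 0 h0dom))
    by_contra hneg
    push_neg at hneg
    have h0mem : (0:ℝ) ∈ Set.Icc (Kfun α ω (x t)) (Kfun α ω (x 0)) := ⟨hneg.le, hg0.le⟩
    obtain ⟨s, hs, hgs⟩ := intermediate_value_Icc' ht.1 (hKcont t ht) h0mem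
    exact hKne hEV hcv s (Icc_subset_Dom ht hs) hgs
  · rintro ⟨hEV, hcv, hK0⟩ t ht
    obtain ⟨hE, hC⟩ := conserved hα hx ht
    refine ⟨by rw [hE]; exact hEV, by rw [hC]; exact hcv, ?_⟩
    by_contra hneg
    push_neg at hneg
    have hgt : 0 < Kfun α ω (x t) :=
      lt_of_le_of_ne hneg (Ne.symm (hKne hEV hcv t ht))
    have h0mem : (0:ℝ) ∈ Set.Icc (Kfun α ω (x 0)) (Kfun α ω (x t)) := ⟨hK0.le, hgt.le⟩
    obtain ⟨s, hs, hgs⟩ := intermediate_value_Icc ht.1 (hKcont t ht) h0mem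
    exact hKne hEV hcv s (Icc_subset_Dom ht hs) hgs

end
end KeplerPaper
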